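/- For M = 2, there is no continuously differentiable function g: Ω → ℝ³ (Ω an open set of admissible states w = (ρ, u, θ) with ρ, θ > 0) such that ∂g/∂w = L(w), where L(w) = T^{[θ]⁻1} D(w) with T^{[θ]⁻1} the evaluation matrix and D(w) = diag(1, ρ, ρ/2). -/

import Mathlib

noncomputable def He : ℕ → ℝ → ℝ
  | 0, _ => 1
  | 1, x => x
  | (n + 2), x => x * He (n + 1) x - (n + 1 : ℝ) * He n x

/-- The scaled Hermite basis functions ℋ_α^{[θ]}(v). -/
noncomputable def Hcal (θ : ℝ) (α : ℕ) (v : ℝ) : ℝ :=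
  (1 / Real.sqrt (2 * Real.pi)) * θ ^ (-(((α : ℝ) + 1) / 2)) * He α v *
    Real.exp (-v ^ 2 / 2)

/-- The Hermite–Gauss quadrature points for M = 2: the roots 0, ±√3 of He₃. -/
noncomputable def qpt : Fin 3 → ℝ := ![-Real.sqrt 3, 0, Real.sqrt 3]

/-- The matrix L(w) = (T^{[θ]})⁻¹ D(w) for M = 2, with w = (ρ, u, θ) and
D(w) = diag(1, ρ, ρ/2): its (j,α) entry is ℋ_α^{[θ]}(c_j) · D_{αα}. -/
noncomputable def Lmat (w : Fin 3 → ℝ) : Matrix (Fin 3) (Fin 3) ℝ :=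
  fun j α => Hcal (w 2) α (qpt j) * (![1, w 0, w 0 / 2] : Fin 3 → ℝ) α

/-- θ-derivative of Hcal. -/
noncomputable def dHcal (θ : ℝ) (α : ℕ) (v : ℝ) : ℝ :=
  (1 / Real.sqrt (2 * Real.pi)) *
    ((-(((α : ℝ) + 1) / 2)) * θ ^ (-(((α : ℝ) + 1) / 2) - 1)) * He α v *
    Real.exp (-v ^ 2 / 2)

lemma hasDerivAt_Hcal (α : ℕ) (v : ℝ) {θ : ℝ} (hθ : θ ≠ 0) :
    HasDerivAt (fun t => Hcal t α v) (dHcal θ α v) θ := by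
  have h := (Real.hasDerivAt_rpow_const (p := -(((α : ℝ) + 1) / 2)) (Or.inl hθ))
  have h2 := ((h.const_mul (1 / Real.sqrt (2 * Real.pi))).mul_const (He α v)).mul_const
      (Real.exp (-v ^ 2 / 2))
  exact h2

noncomputable def Ddvec : Fin 3 → ℝ := ![0, 1, 1/2]

open ContinuousLinearMap in
/-- The derivative of `Lmat` at `w₀`. -/
noncomputable def Lder (w₀ : Fin 3 → ℝ) : (Fin 3 → ℝ) →L[ℝ] (Fin 3 → Fin 3 → ℝ) :=
  ContinuousLinearMap.pi fun j => ContinuousLinearMap.pi fun α =>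
    Hcal (w₀ 2) α (qpt j) • (Ddvec α • proj 0) +
      ((![1, w₀ 0, w₀ 0 / 2] : Fin 3 → ℝ) α) • (dHcal (w₀ 2) α (qpt j) • proj 2)

open ContinuousLinearMap in
lemma hasFDerivAt_Lmat {w₀ : Fin 3 → ℝ} (hθ : w₀ 2 ≠ 0) :
    HasFDerivAt (fun (w : Fin 3 → ℝ) (j α : Fin 3) => Hcal (w 2) (α : ℕ) (qpt j) * (![1, w 0, w 0 / 2] : Fin 3 → ℝ) α)
      (Lder w₀) w₀ := by
  unfold Lder
  rw [hasFDerivAt_pi]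
  intro j
  rw [hasFDerivAt_pi]
  intro α
  have hu : HasFDerivAt (fun w : Fin 3 → ℝ => Hcal (w 2) α (qpt j))
      (dHcal (w₀ 2) α (qpt j) • (proj 2 : (Fin 3 → ℝ) →L[ℝ] ℝ)) w₀ := by
    have hp : HasFDerivAt (fun w : Fin 3 → ℝ => w 2) (proj 2 : (Fin 3 → ℝ) →L[ℝ] ℝ) w₀ :=
      hasFDerivAt_apply 2 w₀
    exact (hasDerivAt_Hcal α (qpt j) hθ).comp_hasFDerivAt w₀ hp
  have hv : HasFDerivAt (fun w : Fin 3 → ℝ => (![1, w 0, w 0 / 2] : Fin 3 → ℝ) α)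
      (Ddvec α • (proj 0 : (Fin 3 → ℝ) →L[ℝ] ℝ)) w₀ := by
    fin_cases α
    · simpa [Ddvec] using (hasFDerivAt_const (1 : ℝ) w₀)
    · simpa [Ddvec] using (hasFDerivAt_apply (𝕜 := ℝ) 0 w₀)
    · simpa [Ddvec] using (((hasFDerivAt_apply (𝕜 := ℝ) 0 w₀).const_mul (1/2)) : HasFDerivAt (fun w : Fin 3 → ℝ => (1/2) * w 0) _ w₀).congr_fderiv rfl |>.congr_of_eventuallyEq (Filter.Eventually.of_forall fun w => by ring)
  exact hu.mul hv

/-- Bundled continuous linear map sending a matrix to its `mulVecLin` as a CLM. -/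
noncomputable def Phi : (Fin 3 → Fin 3 → ℝ) →L[ℝ] ((Fin 3 → ℝ) →L[ℝ] (Fin 3 → ℝ)) :=
  LinearMap.toContinuousLinearMap
    (((LinearMap.toContinuousLinearMap :
        ((Fin 3 → ℝ) →ₗ[ℝ] (Fin 3 → ℝ)) ≃ₗ[ℝ] _).toLinearMap).comp
      (Matrix.toLin' : Matrix (Fin 3) (Fin 3) ℝ ≃ₗ[ℝ] _).toLinearMap)

lemma Phi_apply (M : Matrix (Fin 3) (Fin 3) ℝ) :
    Phi M = LinearMap.toContinuousLinearMap M.mulVecLin := by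
  ext u
  simp only [Phi, LinearMap.coe_toContinuousLinearMap', LinearMap.coe_comp,
    LinearEquiv.coe_coe, Function.comp_apply, Matrix.mulVecLin_apply]
  exact congrFun (Matrix.toLin'_apply M u) _

lemma Phi_apply' (M : Fin 3 → Fin 3 → ℝ) (u : Fin 3 → ℝ) (i : Fin 3) :
    Phi M u i = ∑ k, M i k * u k :=
  (congrFun (congrArg (fun F : (Fin 3 → ℝ) →L[ℝ] (Fin 3 → ℝ) => F u) (Phi_apply M)) i).trans rfl

/-- There is no C¹ potential g whose Jacobian equals L(w) on any open set of
admissible states (ρ, u, θ) with ρ > 0, θ > 0. -/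
theorem no_potential_for_L (Ω : Set (Fin 3 → ℝ)) (hopen : IsOpen Ω)
    (hne : Ω.Nonempty) (hadm : ∀ w ∈ Ω, w 0 > 0 ∧ w 2 > 0) :
    ¬ ∃ g : (Fin 3 → ℝ) → (Fin 3 → ℝ), ∀ w ∈ Ω,
        HasFDerivAt g (LinearMap.toContinuousLinearMap (Lmat w).mulVecLin) w := by
  rintro ⟨g, hg⟩
  obtain ⟨w₀, hw₀⟩ := hne
  obtain ⟨hρ, hθ⟩ := hadm w₀ hw₀
  -- the second derivative
  have hL : HasFDerivAt (fun (w : Fin 3 → ℝ) (j α : Fin 3) =>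
      Hcal (w 2) (α : ℕ) (qpt j) * (![1, w 0, w 0 / 2] : Fin 3 → ℝ) α) (Lder w₀) w₀ :=
    hasFDerivAt_Lmat (ne_of_gt hθ)
  have hf' : HasFDerivAt (fun w => LinearMap.toContinuousLinearMap (Lmat w).mulVecLin)
      (Phi.comp (Lder w₀)) w₀ := by
    have := Phi.hasFDerivAt.comp w₀ hL
    refine this.congr_of_eventuallyEq (Filter.Eventually.of_forall fun w => ?_)
    exact (Phi_apply (Lmat w)).symm
  have hev : ∀ᶠ y in nhds w₀, HasFDerivAt g
      (LinearMap.toContinuousLinearMap (Lmat y).mulVecLin) y :=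
    Filter.eventually_of_mem (hopen.mem_nhds hw₀) hg
  have hsym := second_derivative_symmetric_of_eventually hev hf'
      (Pi.single 0 1) (Pi.single 1 1)
  have h2 := congrFun hsym 2
  simp only [ContinuousLinearMap.coe_comp', Function.comp_apply, Phi_apply,
    LinearMap.coe_toContinuousLinearMap', Matrix.mulVecLin_apply, Lder,
    ContinuousLinearMap.pi_apply, ContinuousLinearMap.add_apply,
    ContinuousLinearMap.coe_smul', Pi.smul_apply, ContinuousLinearMap.proj_apply,
    Matrix.mulVec, dotProduct, Fin.sum_univ_three,
    Pi.single_apply, Ddvec, smul_eq_mul, Phi_apply'] at h2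
  norm_num [Fin.ext_iff] at h2
  have hpos : 0 < Hcal (w₀ 2) 1 (qpt 2) := by
    have h3 : (0:ℝ) < Real.sqrt 3 := Real.sqrt_pos.mpr (by norm_num)
    have h2π : (0:ℝ) < Real.sqrt (2 * Real.pi) :=
      Real.sqrt_pos.mpr (by positivity)
    simp only [Hcal, He, qpt, Matrix.cons_val_two, Matrix.tail_cons, Matrix.head_cons]
    have := Real.rpow_pos_of_pos hθ (-(((1:ℕ) + 1 : ℝ) / 2))
    positivity
  exact absurd h2 (ne_of_gt hpos)
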